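/- Fix p₀ ∈ {1, −1, 2, −2} and α = 2/p₀. Let p₁, g : ℂ → ℂ be functions, set d = α·p₁, and let 𝓛ₙ be the associated generalized Fibonacci polynomials of Lucas type over ℂ. Let n ≥ 1 and let r, s ∈ ℂ with s ≠ 0, s² = g(r) (in particular g(r) ≠ 0). If d(r)/s = 2i·cos((2j+1)π/(2n)) for some integer j with 0 ≤ j ≤ n − 1, then r is a root of 𝓛ₙ, i.e. 𝓛ₙ(r) = 0. -/

import Mathlib

/-!
If `d(r) = a + b` and `g(r) = -a b`, then `𝓛ₙ(r) = p₀/2 · (aⁿ + bⁿ)` (Binet form).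
Taking `a = i s e^{iθ}`, `b = i s e^{-iθ}` with `θ = (2j+1)π/(2n)` achieves this, and
`aⁿ + bⁿ = 2 (i s)ⁿ cos(nθ)` vanishes because `nθ` is an odd multiple of `π/2`.
-/

open Complex
open scoped Real

/-- Generalized Fibonacci polynomials of Lucas type over `ℂ`:
`𝓛₀ = p₀`, `𝓛₁ = p₁`, `𝓛ₙ = d·𝓛ₙ₋₁ + g·𝓛ₙ₋₂` where `d = (2/p₀)·p₁`. -/
noncomputable def GFPLC (p0 : ℂ) (p1 g : ℂ → ℂ) : ℕ → ℂ → ℂ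
  | 0 => fun _ => p0
  | 1 => fun x => p1 x
  | n + 2 => fun x =>
      (2 / p0) * p1 x * GFPLC p0 p1 g (n + 1) x + g x * GFPLC p0 p1 g n x

theorem GFPLC_eq_binet {p0 : ℂ} (hp0 : p0 ≠ 0) (p1 g : ℂ → ℂ) {x a b : ℂ}
    (hsum : 2 / p0 * p1 x = a + b) (hprod : g x = -(a * b)) (m : ℕ) :
    GFPLC p0 p1 g m x = p0 / 2 * (a ^ m + b ^ m) := by
  induction m using Nat.twoStepInduction with
  | zero =>
    simp only [GFPLC, pow_zero]
    ring
  | one =>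
    simp only [GFPLC, pow_one]
    field_simp at hsum
    linear_combination hsum / 2
  | more m ih1 ih2 =>
    simp only [GFPLC]
    rw [ih1, ih2, hsum, hprod]
    ring

theorem mul_exp_pow_add_mul_exp_neg_pow (c θ : ℂ) (n : ℕ) :
    (c * exp (θ * I)) ^ n + (c * exp (-θ * I)) ^ n = 2 * c ^ n * cos (n * θ) := by
  simp only [mul_pow, ← exp_nat_mul, cos]
  ring_nf

theorem cos_nat_mul_odd_mul_pi_div_two_nat_mul {n : ℕ} (hn : n ≠ 0) (j : ℕ) :
    cos (n * ((2 * j + 1) * π / (2 * n))) = 0 := by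
  rw [cos_eq_zero_iff]
  exact ⟨j, by push_cast; field_simp⟩

theorem gfplc_roots (p0 : ℂ)
    (hp0 : p0 = 1 ∨ p0 = -1 ∨ p0 = 2 ∨ p0 = -2)
    (p1 g : ℂ → ℂ) (n : ℕ) (hn : 1 ≤ n)
    (r s : ℂ) (hs : s ≠ 0) (hsg : s ^ 2 = g r)
    (hroot : ∃ j : ℕ, j ≤ n - 1 ∧
      (2 / p0) * p1 r / s =
        2 * Complex.I *
          Complex.cos ((2 * (j : ℂ) + 1) * (Real.pi : ℂ) / (2 * (n : ℂ)))) :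
    GFPLC p0 p1 g n r = 0 := by
  obtain ⟨j, -, hj⟩ := hroot
  have hp0' : p0 ≠ 0 := by rcases hp0 with h | h | h | h <;> norm_num [h]
  set θ : ℂ := (2 * j + 1) * π / (2 * n)
  have hsum : 2 / p0 * p1 r = I * s * exp (θ * I) + I * s * exp (-θ * I) := by
    rw [(div_eq_iff hs).mp hj]
    have h := mul_exp_pow_add_mul_exp_neg_pow (I * s) θ 1
    rw [Nat.cast_one, one_mul] at h
    linear_combination -h
  have hprod : g r = -(I * s * exp (θ * I) * (I * s * exp (-θ * I))) := by
    rw [← hsg, mul_mul_mul_comm, ← exp_add, neg_mul, add_neg_cancel, exp_zero]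
    linear_combination s ^ 2 * I_sq
  rw [GFPLC_eq_binet hp0' p1 g hsum hprod, mul_exp_pow_add_mul_exp_neg_pow,
    cos_nat_mul_odd_mul_pi_div_two_nat_mul (by omega)]
  ring
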